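/- arXiv:cond-mat/0112214 — 4 statements merged into one kernel-verified Lean document; each statement's English description precedes it below -/
import Mathlib

section
/- Liu's theorem: Let V and V' be finite-dimensional real vector spaces, A : V → V' a linear map, B ∈ V', a ∈ V* a linear functional on V, and b ∈ ℝ. Assume the constraint set is nonempty, i.e. there exists x₀ ∈ V with A x₀ + B = 0. Then the inequality a(x) + b ≥ 0 holds for all x ∈ V satisfying A x + B = 0 if and only if there exists a linear functional λ ∈ (V')* such that a = λ ∘ A (the Liu equation) and b - λ(B) ≥ 0 (the dissipation inequality). -/
/-- **Liu's theorem.** Let `V` and `V'` be finite-dimensional real vector spaces,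
`A : V → V'` linear, `B ∈ V'`, `a ∈ V*`, `b ∈ ℝ`. Assume the constraint set is
nonempty. Then `a x + b ≥ 0` for all `x` with `A x + B = 0` iff there is a linear
functional `lam ∈ (V')*` with `a = lam.comp A` and `b - lam B ≥ 0`. -/
theorem liu_theorem {V V' : Type*}
    [AddCommGroup V] [Module ℝ V] [FiniteDimensional ℝ V]
    [AddCommGroup V'] [Module ℝ V'] [FiniteDimensional ℝ V']
    (A : V →ₗ[ℝ] V') (B : V') (a : V →ₗ[ℝ] ℝ) (b : ℝ)
    (hne : ∃ x₀ : V, A x₀ + B = 0) :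
    (∀ x : V, A x + B = 0 → a x + b ≥ 0) ↔
      ∃ lam : V' →ₗ[ℝ] ℝ, a = lam.comp A ∧ b - lam B ≥ 0 := by
  obtain ⟨x₀, hx₀⟩ := hne
  constructor
  · intro h
    -- a vanishes on ker A
    have hker : LinearMap.ker A ≤ LinearMap.ker a := by
      intro y hy
      have hy' : A y = 0 := hy
      have key : ∀ t : ℝ, t * a y + (a x₀ + b) ≥ 0 := by
        intro t
        have := h (x₀ + t • y) (by simp [hy', hx₀])
        simpa [mul_comm, add_comm, add_assoc, add_left_comm] using this
      by_contra hay
      have hay' : a y ≠ 0 := hay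
      have := key ((-(a x₀ + b) - 1) / a y)
      rw [div_mul_cancel₀ _ hay'] at this
      linarith
    -- factor a through A
    let q : V ⧸ LinearMap.ker A →ₗ[ℝ] ℝ := (LinearMap.ker A).liftQ a hker
    let e := A.quotKerEquivRange
    let f : LinearMap.range A →ₗ[ℝ] ℝ := q.comp (e.symm : LinearMap.range A →ₗ[ℝ] _)
    obtain ⟨lam, hlam⟩ := f.exists_extend
    have hcomp : ∀ x : V, lam (A x) = a x := by
      intro x
      have h1 : (⟨A x, LinearMap.mem_range_self A x⟩ : LinearMap.range A) =
          e (Submodule.Quotient.mk x) := by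
        apply Subtype.ext
        simp [e, LinearMap.quotKerEquivRange]
      have : lam (A x) = f ⟨A x, LinearMap.mem_range_self A x⟩ := by
        have := congrArg (fun g => g ⟨A x, LinearMap.mem_range_self A x⟩) hlam
        simpa using this
      rw [this, h1]
      simp [f, q]
    refine ⟨lam, ?_, ?_⟩
    · ext x; simp [hcomp x]
    · have hB : B = -(A x₀) := eq_neg_of_add_eq_zero_right hx₀
      have := h x₀ hx₀
      rw [hB, map_neg, hcomp]
      linarith
  · rintro ⟨lam, rfl, hdis⟩ x hx
    have hAx : A x = -B := eq_neg_of_add_eq_zero_left hx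
    simp only [LinearMap.comp_apply, hAx, map_neg]
    linarith
end

section
/- Derivation of the telegraph-type temperature equation from the Guyer–Krumhansl system: Let T : ℝ × ℝ³ → ℝ be a smooth nowhere-vanishing scalar field (temperature) and q : ℝ × ℝ³ → ℝ³ a smooth vector field (heat current), and let c, l, m, l₁, l₂, l₃ be real constants. Assume the internal energy balance c ∂ₜT + ∇·q = 0 and the Guyer–Krumhansl equation l m ∂ₜq + q = l ∇(1/T) + l ( l₁ Δq + (l₂ + l₃) ∇(∇·q) ). Then T satisfies the telegraph-type equation l m c ∂ₜₜT + c ∂ₜT + l Δ(1/T) - l c (l₁ + l₂ + l₃) Δ∂ₜT = 0. -/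
/-- Spacetime points: time `t : ℝ` and position `x : Fin 3 → ℝ`. -/
abbrev SpaceTime : Type := ℝ × (Fin 3 → ℝ)

/-- Partial time derivative `∂ₜ`. -/
noncomputable def timeDeriv (f : SpaceTime → ℝ) (p : SpaceTime) : ℝ :=
  fderiv ℝ f p (1, 0)

/-- Partial spatial derivative `∂ᵢ` in direction `i`. -/
noncomputable def spaceDeriv (i : Fin 3) (f : SpaceTime → ℝ) (p : SpaceTime) : ℝ :=
  fderiv ℝ f p (0, Pi.single i 1)

/-- Spatial divergence `∇·` of a vector field. -/
noncomputable def diverg (q : SpaceTime → (Fin 3 → ℝ)) (p : SpaceTime) : ℝ :=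
  ∑ i, spaceDeriv i (fun x => q x i) p

/-- Spatial Laplacian `Δ` of a scalar field. -/
noncomputable def laplacian (f : SpaceTime → ℝ) (p : SpaceTime) : ℝ :=
  ∑ i, spaceDeriv i (spaceDeriv i f) p

/-! ### Auxiliary directional-derivative machinery -/

/-- Directional derivative in direction `v`. -/
noncomputable def Dv (v : SpaceTime) (f : SpaceTime → ℝ) (p : SpaceTime) : ℝ :=
  fderiv ℝ f p v

/-- The time direction. -/
def vt : SpaceTime := (1, 0)

/-- The `i`-th spatial direction. -/
def ee (i : Fin 3) : SpaceTime := (0, Pi.single i 1)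

lemma timeDeriv_eq_Dv (f : SpaceTime → ℝ) : timeDeriv f = Dv vt f := rfl

lemma spaceDeriv_eq_Dv (i : Fin 3) (f : SpaceTime → ℝ) :
    spaceDeriv i f = Dv (ee i) f := rfl

lemma diverg_eq_Dv (q : SpaceTime → (Fin 3 → ℝ)) :
    diverg q = fun p => ∑ i, Dv (ee i) (fun x => q x i) p := rfl

lemma laplacian_eq_Dv (f : SpaceTime → ℝ) :
    laplacian f = fun p => ∑ i, Dv (ee i) (Dv (ee i) f) p := rfl

lemma Dv_smooth {f : SpaceTime → ℝ} (hf : ContDiff ℝ (⊤ : ℕ∞) f) (v : SpaceTime) :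
    ContDiff ℝ (⊤ : ℕ∞) (Dv v f) :=
  (ContinuousLinearMap.apply ℝ ℝ v).contDiff.comp (hf.fderiv_right (by simp))

lemma Dv_comm {f : SpaceTime → ℝ} (hf : ContDiff ℝ (⊤ : ℕ∞) f) (v w p : SpaceTime) :
    Dv v (Dv w f) p = Dv w (Dv v f) p := by
  have hdf : Differentiable ℝ f := hf.differentiable (by simp)
  have hdf' : Differentiable ℝ (fderiv ℝ f) :=
    (hf.fderiv_right (m := (⊤ : ℕ∞)) (by simp)).differentiable (by simp)
  have key : ∀ u : SpaceTime, fderiv ℝ (Dv u f) p = (fderiv ℝ (fderiv ℝ f) p).flip u := by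
    intro u
    have h1 : HasFDerivAt (fun y => (ContinuousLinearMap.apply ℝ ℝ u) (fderiv ℝ f y))
        (((ContinuousLinearMap.apply ℝ ℝ u)).comp (fderiv ℝ (fderiv ℝ f) p)) p :=
      (ContinuousLinearMap.apply ℝ ℝ u).hasFDerivAt.comp p (hdf' p).hasFDerivAt
    have h2 : (fun y => (ContinuousLinearMap.apply ℝ ℝ u) (fderiv ℝ f y)) = Dv u f := rfl
    rw [h2] at h1
    rw [h1.fderiv]; ext z <;> rfl
  have hsym := second_derivative_symmetric (f' := fderiv ℝ f)
    (fun y => (hdf y).hasFDerivAt) (hdf' p).hasFDerivAt v w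
  simp only [Dv, key]
  simpa using hsym

lemma Dv_congr {f g : SpaceTime → ℝ} (h : ∀ x, f x = g x) (v : SpaceTime) :
    Dv v f = Dv v g := by
  rw [funext h]

lemma Dv_add {f g : SpaceTime → ℝ} (hf : ContDiff ℝ (⊤ : ℕ∞) f) (hg : ContDiff ℝ (⊤ : ℕ∞) g)
    (v : SpaceTime) :
    Dv v (fun x => f x + g x) = fun p => Dv v f p + Dv v g p := by
  funext p
  simp only [Dv]
  rw [fderiv_fun_add (hf.differentiable (by simp)).differentiableAt
    (hg.differentiable (by simp)).differentiableAt]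
  rfl

lemma Dv_const_mul {f : SpaceTime → ℝ} (hf : ContDiff ℝ (⊤ : ℕ∞) f) (a : ℝ) (v : SpaceTime) :
    Dv v (fun x => a * f x) = fun p => a * Dv v f p := by
  funext p
  simp only [Dv]
  rw [fderiv_const_mul (hf.differentiable (by simp)).differentiableAt]
  rfl

lemma Dv_sum {ι : Type*} (s : Finset ι) {f : ι → SpaceTime → ℝ}
    (hf : ∀ i ∈ s, ContDiff ℝ (⊤ : ℕ∞) (f i)) (v : SpaceTime) :
    Dv v (fun x => ∑ i ∈ s, f i x) = fun p => ∑ i ∈ s, Dv v (f i) p := by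
  funext p
  simp only [Dv]
  rw [fderiv_fun_sum (fun i hi => ((hf i hi).differentiable (by simp)).differentiableAt)]
  simp

/-- **Telegraph-type temperature equation from the Guyer–Krumhansl system.**
From the internal energy balance `c ∂ₜT + ∇·q = 0` and the Guyer–Krumhansl
equation `l m ∂ₜq + q = l ∇(1/T) + l (l₁ Δq + (l₂+l₃) ∇(∇·q))` one obtains
`l m c ∂ₜₜT + c ∂ₜT + l Δ(1/T) - l c (l₁+l₂+l₃) Δ∂ₜT = 0`. -/
theorem guyer_krumhansl_telegraph
    (T : SpaceTime → ℝ) (q : SpaceTime → (Fin 3 → ℝ))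
    (c l m l₁ l₂ l₃ : ℝ)
    (hT : ContDiff ℝ (⊤ : ℕ∞) T) (hq : ContDiff ℝ (⊤ : ℕ∞) q)
    (hT0 : ∀ p : SpaceTime, T p ≠ 0)
    (hbal : ∀ p : SpaceTime, c * timeDeriv T p + diverg q p = 0)
    (hGK : ∀ (p : SpaceTime) (i : Fin 3),
      l * m * timeDeriv (fun x => q x i) p + q p i =
        l * spaceDeriv i (fun x => 1 / T x) p +
        l * (l₁ * laplacian (fun x => q x i) p +
             (l₂ + l₃) * spaceDeriv i (diverg q) p)) :
    ∀ p : SpaceTime,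
      l * m * c * timeDeriv (timeDeriv T) p + c * timeDeriv T p +
        l * laplacian (fun x => 1 / T x) p -
        l * c * (l₁ + l₂ + l₃) * laplacian (timeDeriv T) p = 0 := by
  -- basic smoothness facts
  have hqi : ∀ i : Fin 3, ContDiff ℝ (⊤ : ℕ∞) (fun x => q x i) := fun i =>
    (ContinuousLinearMap.proj (R := ℝ) (φ := fun _ : Fin 3 => ℝ) i).contDiff.comp hq
  have hinvT : ContDiff ℝ (⊤ : ℕ∞) (fun x => 1 / T x) := contDiff_const.div hT hT0
  have htT' : ContDiff ℝ (⊤ : ℕ∞) (Dv vt T) := Dv_smooth hT vt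
  have hdivq : ContDiff ℝ (⊤ : ℕ∞) (diverg q) := by
    rw [diverg_eq_Dv]
    exact ContDiff.sum (fun i _ => Dv_smooth (hqi i) _)
  -- hypotheses in `Dv` form
  have hbal' : ∀ x : SpaceTime, c * Dv vt T x + diverg q x = 0 := fun x => hbal x
  have hdq : ∀ x : SpaceTime, diverg q x = -c * Dv vt T x := by
    intro x; have := hbal' x; linarith
  intro p
  -- S1 : time derivative of the balance law
  have S1 : c * Dv vt (Dv vt T) p + Dv vt (diverg q) p = 0 := by
    have h0 : Dv vt (fun x => c * Dv vt T x + diverg q x) = Dv vt (fun _ => (0:ℝ)) :=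
      Dv_congr hbal' vt
    rw [Dv_add (contDiff_const.mul htT' : ContDiff ℝ (⊤ : ℕ∞) fun x => c * Dv vt T x) hdivq vt,
      Dv_const_mul htT' c vt] at h0
    have h2 : Dv vt (fun _ : SpaceTime => (0:ℝ)) p = 0 := by simp [Dv]
    have h3 := congrFun h0 p
    rw [h2] at h3
    exact h3
  -- S2 : ∂ₜ(div q) = ∑ᵢ ∂ᵢ(∂ₜ qᵢ)
  have S2 : Dv vt (diverg q) p = ∑ i, Dv (ee i) (Dv vt (fun x => q x i)) p := by
    have h1 : Dv vt (diverg q) = fun z => ∑ i, Dv vt (Dv (ee i) (fun x => q x i)) z := by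
      rw [diverg_eq_Dv,
        Dv_sum (f := fun i => Dv (ee i) (fun x => q x i)) Finset.univ
          (fun i _ => Dv_smooth (hqi i) _) vt]
    rw [h1]
    exact Finset.sum_congr rfl fun i _ => Dv_comm (hqi i) vt (ee i) p
  -- S3 : Δ(div q) = -c Δ(∂ₜT)
  have S3 : laplacian (diverg q) p = -c * laplacian (Dv vt T) p := by
    have h1 : ∀ i : Fin 3, Dv (ee i) (diverg q) = fun x => -c * Dv (ee i) (Dv vt T) x := by
      intro i
      rw [Dv_congr hdq (ee i), Dv_const_mul htT' (-c) (ee i)]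
    calc laplacian (diverg q) p = ∑ i, Dv (ee i) (Dv (ee i) (diverg q)) p := rfl
      _ = ∑ i, -c * Dv (ee i) (Dv (ee i) (Dv vt T)) p := by
          refine Finset.sum_congr rfl fun i _ => ?_
          rw [h1 i, Dv_const_mul (Dv_smooth htT' (ee i)) (-c) (ee i)]
      _ = -c * laplacian (Dv vt T) p := by rw [← Finset.mul_sum]; rfl
  -- S4 : ∑ᵢ ∂ᵢ(Δ qᵢ) = Δ(div q)
  have S4 : (∑ i, Dv (ee i) (laplacian (fun x => q x i)) p) = laplacian (diverg q) p := by
    have hterm : ∀ i j : Fin 3,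
        Dv (ee i) (Dv (ee j) (Dv (ee j) (fun x => q x i))) p
        = Dv (ee j) (Dv (ee j) (Dv (ee i) (fun x => q x i))) p := by
      intro i j
      rw [Dv_comm (Dv_smooth (hqi i) (ee j)) (ee i) (ee j) p]
      exact congrArg (fun h => Dv (ee j) h p)
        (funext fun x => Dv_comm (hqi i) (ee i) (ee j) x)
    have hL : ∀ i : Fin 3, Dv (ee i) (laplacian (fun x => q x i)) p
        = ∑ j, Dv (ee i) (Dv (ee j) (Dv (ee j) (fun x => q x i))) p := by
      intro i
      rw [laplacian_eq_Dv,
        Dv_sum (f := fun j => Dv (ee j) (Dv (ee j) (fun x => q x i))) Finset.univ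
          (fun j _ => Dv_smooth (Dv_smooth (hqi i) _) _) (ee i)]
    have hR : ∀ j : Fin 3, Dv (ee j) (Dv (ee j) (diverg q)) p
        = ∑ i, Dv (ee j) (Dv (ee j) (Dv (ee i) (fun x => q x i))) p := by
      intro j
      have h1 : Dv (ee j) (diverg q)
          = fun z => ∑ i, Dv (ee j) (Dv (ee i) (fun x => q x i)) z := by
        rw [diverg_eq_Dv,
          Dv_sum (f := fun i => Dv (ee i) (fun x => q x i)) Finset.univ
            (fun i _ => Dv_smooth (hqi i) _) (ee j)]
      rw [h1,
        Dv_sum (f := fun i => Dv (ee j) (Dv (ee i) (fun x => q x i))) Finset.univ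
          (fun i _ => Dv_smooth (Dv_smooth (hqi i) _) _) (ee j)]
    calc (∑ i, Dv (ee i) (laplacian (fun x => q x i)) p)
        = ∑ i, ∑ j, Dv (ee i) (Dv (ee j) (Dv (ee j) (fun x => q x i))) p :=
          Finset.sum_congr rfl fun i _ => hL i
      _ = ∑ j, ∑ i, Dv (ee j) (Dv (ee j) (Dv (ee i) (fun x => q x i))) p := by
          rw [Finset.sum_comm]
          exact Finset.sum_congr rfl fun j _ => Finset.sum_congr rfl fun i _ => hterm i j
      _ = ∑ j, Dv (ee j) (Dv (ee j) (diverg q)) p :=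
          Finset.sum_congr rfl fun j _ => (hR j).symm
      _ = laplacian (diverg q) p := rfl
  -- G : spatial derivative of the GK equation
  have G : ∀ i : Fin 3,
      l * m * Dv (ee i) (Dv vt (fun x => q x i)) p + Dv (ee i) (fun x => q x i) p
      = l * Dv (ee i) (Dv (ee i) (fun x => 1 / T x)) p
        + l * (l₁ * Dv (ee i) (laplacian (fun x => q x i)) p
            + (l₂ + l₃) * Dv (ee i) (Dv (ee i) (diverg q)) p) := by
    intro i
    have hsm1 : ContDiff ℝ (⊤ : ℕ∞) (Dv vt (fun x => q x i)) := Dv_smooth (hqi i) vt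
    have hsm2 : ContDiff ℝ (⊤ : ℕ∞) (Dv (ee i) (fun x => 1 / T x)) := Dv_smooth hinvT (ee i)
    have hsm3 : ContDiff ℝ (⊤ : ℕ∞) (laplacian (fun x => q x i)) := by
      rw [laplacian_eq_Dv]
      exact ContDiff.sum fun j _ => Dv_smooth (Dv_smooth (hqi i) _) _
    have hsm4 : ContDiff ℝ (⊤ : ℕ∞) (Dv (ee i) (diverg q)) := Dv_smooth hdivq (ee i)
    have hGK' : ∀ x : SpaceTime,
        l * m * Dv vt (fun y => q y i) x + q x i =
          l * Dv (ee i) (fun y => 1 / T y) x +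
          l * (l₁ * laplacian (fun y => q y i) x
            + (l₂ + l₃) * Dv (ee i) (diverg q) x) := fun x => hGK x i
    have h := Dv_congr hGK' (ee i)
    rw [Dv_add (contDiff_const.mul hsm1 :
          ContDiff ℝ (⊤ : ℕ∞) fun x => l * m * Dv vt (fun y => q y i) x) (hqi i) (ee i),
      Dv_const_mul hsm1 (l * m) (ee i),
      Dv_add (contDiff_const.mul hsm2 :
          ContDiff ℝ (⊤ : ℕ∞) fun x => l * Dv (ee i) (fun y => 1 / T y) x)
        (contDiff_const.mul ((contDiff_const.mul hsm3).add (contDiff_const.mul hsm4)) :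
          ContDiff ℝ (⊤ : ℕ∞) fun x => l * (l₁ * laplacian (fun y => q y i) x
            + (l₂ + l₃) * Dv (ee i) (diverg q) x)) (ee i),
      Dv_const_mul hsm2 l (ee i),
      Dv_const_mul ((contDiff_const.mul hsm3).add (contDiff_const.mul hsm4) :
          ContDiff ℝ (⊤ : ℕ∞) fun x => l₁ * laplacian (fun y => q y i) x
            + (l₂ + l₃) * Dv (ee i) (diverg q) x) l (ee i),
      Dv_add (contDiff_const.mul hsm3 :
          ContDiff ℝ (⊤ : ℕ∞) fun x => l₁ * laplacian (fun y => q y i) x)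
        (contDiff_const.mul hsm4 :
          ContDiff ℝ (⊤ : ℕ∞) fun x => (l₂ + l₃) * Dv (ee i) (diverg q) x) (ee i),
      Dv_const_mul hsm3 l₁ (ee i), Dv_const_mul hsm4 (l₂ + l₃) (ee i)] at h
    exact congrFun h p
  -- expand all the sums over `Fin 3`
  have Sdiv : diverg q p = ∑ i, Dv (ee i) (fun x => q x i) p := rfl
  have SlapI : laplacian (fun x => 1 / T x) p
      = ∑ i, Dv (ee i) (Dv (ee i) (fun x => 1 / T x)) p := rfl
  have SlapD : laplacian (diverg q) p = ∑ i, Dv (ee i) (Dv (ee i) (diverg q)) p := rfl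
  have Sbal := hbal' p
  simp only [Fin.sum_univ_three] at S2 S4 Sdiv SlapI SlapD
  have G0 := G 0; have G1 := G 1; have G2 := G 2
  -- rewrite the goal in `Dv` form and conclude by linear algebra
  simp only [timeDeriv_eq_Dv]
  linear_combination (-(1:ℝ)) * (G0 + G1 + G2) - l * m * S2 + l * m * S1 - Sdiv + Sbal
    + l * SlapI - l * l₁ * S4 + l * (l₂ + l₃) * SlapD - l * (l₁ + l₂ + l₃) * S3
end

section
/- Elimination of the current multipliers in the generalized thermodynamic Ginzburg–Landau system: Let ξ, Γ : ℝ × ℝ³ → ℝ be smooth scalar fields, A : ℝ × ℝ³ → ℝ³ a smooth vector field, B : ℝ × ℝ³ → Mat₃(ℝ) a smooth matrix field, and l₁, l₂, l₃¹, l₃², l₃³ real constants. Assume the conductivity equations: ∂ₜξ + ∇·A = l₁ Γ; A = l₂ (∇Γ + ∇·B); and B = l₃¹ ∇A + l₃² (∇A)ᵀ + l₃³ (∇·A) I, where (∇A)ᵢⱼ = ∂ᵢAⱼ, (∇·B)ⱼ = Σᵢ ∂ᵢBᵢⱼ, and I is the identity matrix. Then, with l₃ = l₃¹ + l₃² + l₃³,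 the internal variable satisfies ∂ₜξ = l₁ Γ - l₂ (1 + l₁ l₃) ΔΓ + l₂ l₃ Δ∂ₜξ. -/
private lemma sd_contDiff {f : SpaceTime → ℝ} (hf : ContDiff ℝ (⊤ : ℕ∞) f) (i : Fin 3) :
    ContDiff ℝ (⊤ : ℕ∞) (spaceDeriv i f) :=
  (hf.fderiv_right (by simp)).clm_apply contDiff_const

private lemma td_contDiff {f : SpaceTime → ℝ} (hf : ContDiff ℝ (⊤ : ℕ∞) f) :
    ContDiff ℝ (⊤ : ℕ∞) (timeDeriv f) :=
  (hf.fderiv_right (by simp)).clm_apply contDiff_const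

private lemma lap_contDiff {f : SpaceTime → ℝ} (hf : ContDiff ℝ (⊤ : ℕ∞) f) :
    ContDiff ℝ (⊤ : ℕ∞) (laplacian f) := by
  have : ContDiff ℝ (⊤ : ℕ∞) fun p => ∑ i, spaceDeriv i (spaceDeriv i f) p :=
    ContDiff.sum fun i _ => sd_contDiff (sd_contDiff hf i) i
  exact this

private lemma sd_add {f g : SpaceTime → ℝ} {p : SpaceTime} (hf : DifferentiableAt ℝ f p)
    (hg : DifferentiableAt ℝ g p) (i : Fin 3) :
    spaceDeriv i (fun x => f x + g x) p = spaceDeriv i f p + spaceDeriv i g p := by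
  simp [spaceDeriv, fderiv_fun_add hf hg]

private lemma sd_sub {f g : SpaceTime → ℝ} {p : SpaceTime} (hf : DifferentiableAt ℝ f p)
    (hg : DifferentiableAt ℝ g p) (i : Fin 3) :
    spaceDeriv i (fun x => f x - g x) p = spaceDeriv i f p - spaceDeriv i g p := by
  simp [spaceDeriv, fderiv_fun_sub hf hg]

private lemma sd_const_mul {f : SpaceTime → ℝ} {p : SpaceTime}
    (hf : DifferentiableAt ℝ f p) (c : ℝ) (i : Fin 3) :
    spaceDeriv i (fun x => c * f x) p = c * spaceDeriv i f p := by
  simp [spaceDeriv, fderiv_const_mul hf c]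

private lemma sd_sum {F : Fin 3 → SpaceTime → ℝ} {p : SpaceTime}
    (hF : ∀ j, DifferentiableAt ℝ (F j) p) (i : Fin 3) :
    spaceDeriv i (fun x => ∑ j, F j x) p = ∑ j, spaceDeriv i (F j) p := by
  simp only [spaceDeriv]
  rw [fderiv_fun_sum (fun j _ => hF j)]
  simp

private lemma sd_comm {f : SpaceTime → ℝ} (hf : ContDiff ℝ (⊤ : ℕ∞) f) (i j : Fin 3) (p : SpaceTime) :
    spaceDeriv i (spaceDeriv j f) p = spaceDeriv j (spaceDeriv i f) p := by
  have hsymm := hf.contDiffAt.isSymmSndFDerivAt (x := p) (by rw [minSmoothness_of_isRCLikeNormedField]; exact WithTop.coe_le_coe.mpr le_top)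
  have hd : DifferentiableAt ℝ (fderiv ℝ f) p :=
    ((hf.fderiv_right (m := 1) (by exact WithTop.coe_le_coe.mpr le_top)).differentiable one_ne_zero) p
  have key : ∀ (v w : SpaceTime),
      fderiv ℝ (fun x => fderiv ℝ f x w) p v = fderiv ℝ (fderiv ℝ f) p v w := by
    intro v w
    rw [fderiv_clm_apply hd (differentiableAt_const w)]
    simp
  show fderiv ℝ (fun x => fderiv ℝ f x (0, Pi.single j 1)) p (0, Pi.single i 1) =
    fderiv ℝ (fun x => fderiv ℝ f x (0, Pi.single i 1)) p (0, Pi.single j 1)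
  rw [key, key, hsymm]

/-- **Elimination of the current multipliers in the generalized thermodynamic
Ginzburg–Landau system.** From the conductivity equations
`∂ₜξ + ∇·A = l₁ Γ`, `A = l₂ (∇Γ + ∇·B)` and
`B = l₃₁ ∇A + l₃₂ (∇A)ᵀ + l₃₃ (∇·A) I` (with `(∇A)ᵢⱼ = ∂ᵢAⱼ`,
`(∇·B)ⱼ = Σᵢ ∂ᵢBᵢⱼ`) one obtains, with `l₃ = l₃₁ + l₃₂ + l₃₃`,
`∂ₜξ = l₁ Γ - l₂ (1 + l₁ l₃) ΔΓ + l₂ l₃ Δ∂ₜξ`. -/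
theorem generalized_ginzburg_landau_elimination
    (ξ Γ : SpaceTime → ℝ) (A : SpaceTime → (Fin 3 → ℝ))
    (B : SpaceTime → (Fin 3 → Fin 3 → ℝ))
    (l₁ l₂ l₃₁ l₃₂ l₃₃ : ℝ)
    (hξ : ContDiff ℝ (⊤ : ℕ∞) ξ) (hΓ : ContDiff ℝ (⊤ : ℕ∞) Γ)
    (hA : ContDiff ℝ (⊤ : ℕ∞) A) (hB : ContDiff ℝ (⊤ : ℕ∞) B)
    (h1 : ∀ p : SpaceTime, timeDeriv ξ p + diverg A p = l₁ * Γ p)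
    (h2 : ∀ (p : SpaceTime) (i : Fin 3),
      A p i = l₂ * (spaceDeriv i Γ p + ∑ j, spaceDeriv j (fun x => B x j i) p))
    (h3 : ∀ (p : SpaceTime) (i j : Fin 3),
      B p i j = l₃₁ * spaceDeriv i (fun x => A x j) p +
                l₃₂ * spaceDeriv j (fun x => A x i) p +
                l₃₃ * diverg A p * (if i = j then (1 : ℝ) else 0)) :
    ∀ p : SpaceTime,
      timeDeriv ξ p =
        l₁ * Γ p - l₂ * (1 + l₁ * (l₃₁ + l₃₂ + l₃₃)) * laplacian Γ p +
          l₂ * (l₃₁ + l₃₂ + l₃₃) * laplacian (timeDeriv ξ) p := by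
  have dAt : ∀ (f : SpaceTime → ℝ), ContDiff ℝ (⊤ : ℕ∞) f → ∀ q, DifferentiableAt ℝ f q :=
    fun f hf q => hf.differentiable (by simp) q
  have hAi : ∀ i : Fin 3, ContDiff ℝ (⊤ : ℕ∞) (fun x => A x i) := fun i =>
    (ContinuousLinearMap.proj (R := ℝ) (φ := fun _ : Fin 3 => ℝ) i).contDiff.comp hA
  have hdvg : ContDiff ℝ (⊤ : ℕ∞) (diverg A) := by
    have : ContDiff ℝ (⊤ : ℕ∞) fun p => ∑ i, spaceDeriv i (fun x => A x i) p :=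
      ContDiff.sum fun i _ => sd_contDiff (hAi i) i
    exact this
  -- Step 1: divergence of each column of B
  have claim1 : ∀ (i : Fin 3) (x : SpaceTime),
      (∑ j, spaceDeriv j (fun y => B y j i) x) =
        l₃₁ * laplacian (fun y => A y i) x +
        (l₃₂ + l₃₃) * spaceDeriv i (diverg A) x := by
    intro i x
    have e1 : ∀ j : Fin 3, spaceDeriv j (fun y => B y j i) x =
        l₃₁ * spaceDeriv j (spaceDeriv j (fun y => A y i)) x +
        (l₃₂ * spaceDeriv j (spaceDeriv i (fun y => A y j)) x +
         (l₃₃ * (if j = i then (1:ℝ) else 0)) * spaceDeriv j (diverg A) x) := by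
      intro j
      have hfun : (fun y => B y j i) = fun y =>
          l₃₁ * spaceDeriv j (fun z => A z i) y +
          (l₃₂ * spaceDeriv i (fun z => A z j) y +
           (l₃₃ * (if j = i then (1:ℝ) else 0)) * diverg A y) := by
        funext y; rw [h3 y j i]; ring
      rw [hfun,
        sd_add (dAt _ (contDiff_const.mul (sd_contDiff (hAi i) j)) x)
          (dAt _ ((contDiff_const.mul (sd_contDiff (hAi j) i)).add
            (contDiff_const.mul hdvg)) x) j,
        sd_add (dAt _ (contDiff_const.mul (sd_contDiff (hAi j) i)) x)
          (dAt _ (contDiff_const.mul hdvg) x) j,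
        sd_const_mul (dAt _ (sd_contDiff (hAi i) j) x) l₃₁ j,
        sd_const_mul (dAt _ (sd_contDiff (hAi j) i) x) l₃₂ j,
        sd_const_mul (dAt _ hdvg x) _ j]
    rw [Finset.sum_congr rfl fun j _ => e1 j]
    rw [Finset.sum_add_distrib, Finset.sum_add_distrib, ← Finset.mul_sum, ← Finset.mul_sum]
    have t1 : (∑ j, spaceDeriv j (spaceDeriv j (fun y => A y i)) x) =
        laplacian (fun y => A y i) x := rfl
    have t2 : (∑ j, spaceDeriv j (spaceDeriv i (fun y => A y j)) x) =
        spaceDeriv i (diverg A) x := by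
      have hc : ∀ j : Fin 3, spaceDeriv j (spaceDeriv i (fun y => A y j)) x =
          spaceDeriv i (spaceDeriv j (fun y => A y j)) x :=
        fun j => (sd_comm (hAi j) i j x).symm
      rw [Finset.sum_congr rfl fun j _ => hc j]
      exact (sd_sum (fun j => dAt _ (sd_contDiff (hAi j) j) x) i).symm
    have t3 : (∑ j, (l₃₃ * (if j = i then (1:ℝ) else 0)) * spaceDeriv j (diverg A) x) =
        l₃₃ * spaceDeriv i (diverg A) x := by
      rw [Finset.sum_eq_single i]
      · simp
      · intro b _ hb; simp [hb]
      · simp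
    rw [t1, t2, t3]; ring
  -- Step 2: substitute into h2
  have hAfun : ∀ i : Fin 3, (fun x => A x i) = fun x =>
      l₂ * spaceDeriv i Γ x + ((l₂*l₃₁) * laplacian (fun y => A y i) x +
        (l₂*(l₃₂+l₃₃)) * spaceDeriv i (diverg A) x) := by
    intro i; funext x; rw [h2 x i, claim1 i x]; ring
  -- Step 3: elliptic relation for diverg A
  have claim2 : ∀ q : SpaceTime, diverg A q = l₂ * laplacian Γ q +
      (l₂ * (l₃₁+l₃₂+l₃₃)) * laplacian (diverg A) q := by
    intro q
    have e2 : ∀ i : Fin 3, spaceDeriv i (fun x => A x i) q =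
        l₂ * spaceDeriv i (spaceDeriv i Γ) q +
        ((l₂*l₃₁) * spaceDeriv i (laplacian (fun y => A y i)) q +
         (l₂*(l₃₂+l₃₃)) * spaceDeriv i (spaceDeriv i (diverg A)) q) := by
      intro i
      conv_lhs => rw [hAfun i]
      rw [sd_add (dAt _ (contDiff_const.mul (sd_contDiff hΓ i)) q)
          (dAt _ ((contDiff_const.mul (lap_contDiff (hAi i))).add
            (contDiff_const.mul (sd_contDiff hdvg i))) q) i,
        sd_add (dAt _ (contDiff_const.mul (lap_contDiff (hAi i))) q)
          (dAt _ (contDiff_const.mul (sd_contDiff hdvg i)) q) i,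
        sd_const_mul (dAt _ (sd_contDiff hΓ i) q) l₂ i,
        sd_const_mul (dAt _ (lap_contDiff (hAi i)) q) _ i,
        sd_const_mul (dAt _ (sd_contDiff hdvg i) q) _ i]
    have e3 : ∀ i : Fin 3, spaceDeriv i (laplacian (fun y => A y i)) q =
        ∑ j, spaceDeriv j (spaceDeriv j (spaceDeriv i (fun y => A y i))) q := by
      intro i
      have hlapfun : laplacian (fun y => A y i) =
          fun x => ∑ j, spaceDeriv j (spaceDeriv j (fun y => A y i)) x := rfl
      rw [hlapfun, sd_sum (fun j => dAt _ (sd_contDiff (sd_contDiff (hAi i) j) j) q) i]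
      refine Finset.sum_congr rfl fun j _ => ?_
      rw [sd_comm (sd_contDiff (hAi i) j) i j q]
      have hsw : spaceDeriv i (spaceDeriv j (fun y => A y i)) =
          spaceDeriv j (spaceDeriv i (fun y => A y i)) :=
        funext fun z => sd_comm (hAi i) i j z
      rw [hsw]
    have e4 : (∑ i, ∑ j, spaceDeriv j (spaceDeriv j (spaceDeriv i (fun y => A y i))) q)
        = laplacian (diverg A) q := by
      rw [Finset.sum_comm]
      have hj : ∀ j : Fin 3,
          (∑ i, spaceDeriv j (spaceDeriv j (spaceDeriv i (fun y => A y i))) q)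
          = spaceDeriv j (spaceDeriv j (diverg A)) q := by
        intro j
        have h5 : spaceDeriv j (diverg A) =
            fun x => ∑ i, spaceDeriv j (spaceDeriv i (fun y => A y i)) x := by
          funext z
          exact sd_sum (fun i => dAt _ (sd_contDiff (hAi i) i) z) j
        rw [h5, sd_sum (fun i => dAt _ (sd_contDiff (sd_contDiff (hAi i) i) j) q) j]
      exact Finset.sum_congr rfl fun j _ => hj j
    have hdq : diverg A q = ∑ i, spaceDeriv i (fun x => A x i) q := rfl
    rw [hdq, Finset.sum_congr rfl fun i _ => e2 i]
    rw [Finset.sum_add_distrib, Finset.sum_add_distrib, ← Finset.mul_sum, ← Finset.mul_sum,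
      ← Finset.mul_sum]
    rw [Finset.sum_congr rfl fun i _ => e3 i, e4]
    have tΓ : (∑ i, spaceDeriv i (spaceDeriv i Γ) q) = laplacian Γ q := rfl
    have td : (∑ i, spaceDeriv i (spaceDeriv i (diverg A)) q) = laplacian (diverg A) q := rfl
    rw [tΓ, td]; ring
  -- Step 4: eliminate diverg A via h1
  intro p
  have hdfun : diverg A = fun q => l₁ * Γ q - timeDeriv ξ q := by
    funext q; have := h1 q; linarith
  have hlapd : laplacian (diverg A) p = l₁ * laplacian Γ p - laplacian (timeDeriv ξ) p := by
    have hi : ∀ i : Fin 3, spaceDeriv i (diverg A) =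
        fun q => l₁ * spaceDeriv i Γ q - spaceDeriv i (timeDeriv ξ) q := by
      intro i; funext q
      rw [hdfun, sd_sub (dAt _ (contDiff_const.mul hΓ) q) (dAt _ (td_contDiff hξ) q) i,
        sd_const_mul (dAt _ hΓ q) l₁ i]
    have hlap : laplacian (diverg A) p = ∑ i, spaceDeriv i (spaceDeriv i (diverg A)) p := rfl
    rw [hlap, Finset.sum_congr rfl fun i _ => by
      rw [hi i, sd_sub (dAt _ (contDiff_const.mul (sd_contDiff hΓ i)) p)
        (dAt _ (sd_contDiff (td_contDiff hξ) i) p) i,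
        sd_const_mul (dAt _ (sd_contDiff hΓ i) p) l₁ i]]
    rw [Finset.sum_sub_distrib, ← Finset.mul_sum]
    rfl
  have h1p := h1 p
  have hc2 := claim2 p
  rw [hlapd] at hc2
  linear_combination h1p - hc2
end

section
/- Entropy production identity for weakly nonlocal heat conduction: Let u : ℝ × ℝ³ → ℝ and q : ℝ × ℝ³ → ℝ³ be smooth fields, B : ℝ × ℝ³ → Mat₃(ℝ) a smooth matrix field, s₀ : ℝ → ℝ continuously differentiable, and m ∈ ℝ. Define the entropy s = s₀(u) - (1/2) m |q|² and the entropy current jₛ with components (jₛ)ᵢ = Σⱼ Bᵢⱼ qⱼ. If the energy balance ∂ₜu + ∇·q = 0 holds, then ∂ₜs + ∇·jₛ = Σᵢⱼ ( Bᵢⱼ - s₀'(u) δᵢⱼ ) ∂ᵢqⱼ + Σⱼ ( (∇·B)ⱼ - m ∂ₜqⱼ ) qⱼ, i.e. the entropy production equals (B - (1/T) I) : ∇q + (∇·B - m ∂ₜq) · q where 1/T = s₀'(u). -/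
/-- **Entropy production identity for weakly nonlocal heat conduction.**
With entropy `s = s₀(u) - (1/2) m |q|²` and entropy current `(jₛ)ᵢ = Σⱼ Bᵢⱼ qⱼ`
(Nyíri form), the energy balance `∂ₜu + ∇·q = 0` implies
`∂ₜs + ∇·jₛ = Σᵢⱼ (Bᵢⱼ - s₀'(u) δᵢⱼ) ∂ᵢqⱼ + Σⱼ ((∇·B)ⱼ - m ∂ₜqⱼ) qⱼ`. -/
theorem heat_conduction_entropy_production
    (u : SpaceTime → ℝ) (q : SpaceTime → (Fin 3 → ℝ))
    (B : SpaceTime → (Fin 3 → Fin 3 → ℝ))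
    (s₀ : ℝ → ℝ) (m : ℝ)
    (hu : ContDiff ℝ (⊤ : ℕ∞) u) (hq : ContDiff ℝ (⊤ : ℕ∞) q) (hB : ContDiff ℝ (⊤ : ℕ∞) B)
    (hs₀ : ContDiff ℝ 1 s₀)
    (hbal : ∀ p : SpaceTime, timeDeriv u p + diverg q p = 0) :
    ∀ p : SpaceTime,
      timeDeriv (fun x => s₀ (u x) - (1 / 2) * m * ∑ j, (q x j) ^ 2) p +
        diverg (fun x i => ∑ j, B x i j * q x j) p =
      (∑ i, ∑ j, (B p i j - deriv s₀ (u p) * (if i = j then (1 : ℝ) else 0)) *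
          spaceDeriv i (fun x => q x j) p) +
      ∑ j, ((∑ i, spaceDeriv i (fun x => B x i j) p) -
          m * timeDeriv (fun x => q x j) p) * q p j := by
  intro p
  have hud : DifferentiableAt ℝ u p := (hu.differentiable (by simp)).differentiableAt
  have hqd : ∀ j, DifferentiableAt ℝ (fun x => q x j) p := fun j =>
    ((differentiable_pi.mp (hq.differentiable (by simp))) j).differentiableAt
  have hBd : ∀ i j, DifferentiableAt ℝ (fun x => B x i j) p := fun i j =>
    ((differentiable_pi.mp (differentiable_pi.mp (hB.differentiable (by simp)) i)) j).differentiableAt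
  have hs₀d : DifferentiableAt ℝ s₀ (u p) := (hs₀.differentiable one_ne_zero).differentiableAt
  -- key 1 : derivative of entropy along any v
  have key1 : ∀ v : SpaceTime,
      fderiv ℝ (fun x => s₀ (u x) - (1 / 2) * m * ∑ j, (q x j) ^ 2) p v
        = deriv s₀ (u p) * fderiv ℝ u p v
          - (1 / 2) * m * ∑ j, (2 * q p j) * fderiv ℝ (fun x => q x j) p v := by
    intro v
    have hS : HasFDerivAt (fun x => s₀ (u x)) (deriv s₀ (u p) • fderiv ℝ u p) p :=
      (hs₀d.hasDerivAt).comp_hasFDerivAt p hud.hasFDerivAt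
    have hsq : ∀ j, HasFDerivAt (fun x => (q x j) ^ 2)
        (q p j • fderiv ℝ (fun x => q x j) p + q p j • fderiv ℝ (fun x => q x j) p) p := fun j => by
      simpa [pow_two] using (hqd j).hasFDerivAt.fun_mul (hqd j).hasFDerivAt
    have hsum : HasFDerivAt (fun x => ∑ j, (q x j) ^ 2)
        (∑ j, (q p j • fderiv ℝ (fun x => q x j) p + q p j • fderiv ℝ (fun x => q x j) p)) p :=
      HasFDerivAt.fun_sum (fun j _ => hsq j)
    have htot : HasFDerivAt (fun x => s₀ (u x) - (1 / 2) * m * ∑ j, (q x j) ^ 2)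
        (deriv s₀ (u p) • fderiv ℝ u p
          - ((1 / 2) * m) • (∑ j, (q p j • fderiv ℝ (fun x => q x j) p
            + q p j • fderiv ℝ (fun x => q x j) p))) p :=
      hS.sub (hsum.const_mul _)
    rw [htot.fderiv]
    simp only [ContinuousLinearMap.coe_sub', Pi.sub_apply, ContinuousLinearMap.coe_smul',
      Pi.smul_apply, ContinuousLinearMap.sum_apply, ContinuousLinearMap.add_apply,
      smul_eq_mul]
    rw [Finset.mul_sum, Finset.mul_sum]
    congr 1
    exact Finset.sum_congr rfl fun j _ => by ring
  -- key 2 : derivative of entropy current component along any v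
  have key2 : ∀ (i : Fin 3) (v : SpaceTime),
      fderiv ℝ (fun x => ∑ j, B x i j * q x j) p v
        = ∑ j, (fderiv ℝ (fun x => B x i j) p v * q p j
            + B p i j * fderiv ℝ (fun x => q x j) p v) := by
    intro i v
    have h : HasFDerivAt (fun x => ∑ j, B x i j * q x j)
        (∑ j, (B p i j • fderiv ℝ (fun x => q x j) p
          + q p j • fderiv ℝ (fun x => B x i j) p)) p :=
      HasFDerivAt.fun_sum (fun j _ => ((hBd i j).hasFDerivAt.fun_mul (hqd j).hasFDerivAt))
    rw [h.fderiv]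
    simp only [ContinuousLinearMap.sum_apply, ContinuousLinearMap.add_apply,
      ContinuousLinearMap.coe_smul', Pi.smul_apply, smul_eq_mul]
    exact Finset.sum_congr rfl fun j _ => by ring
  have hbal' : fderiv ℝ u p (1, 0) = - ∑ i, spaceDeriv i (fun x => q x i) p := by
    have := hbal p
    simp only [timeDeriv, diverg] at this
    linarith
  simp only [timeDeriv, diverg, spaceDeriv] at *
  rw [key1, hbal']
  simp only [key2]
  simp only [Fin.sum_univ_three, Fin.ext_iff]
  norm_num
  ring
end
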